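/- arXiv:1408.0328 — 5 statements merged into one kernel-verified Lean document; each statement's English description precedes it below -/
import Mathlib

section
/- Let f : ℝⁿ → ℝ be shift-invariant, let g : ℝ → ℝ be an arbitrary function, let Q : ℝⁿ → ℝ be an arbitrary function, and define the penalty P(x, y) = Q(g(x₁ − f(x))·(x₁ − y)², …, g(xₙ − f(x))·(xₙ − y)²). Then for every a ∈ ℝ and every x ∈ ℝⁿ, a real number μ minimizes y ↦ P(x, y) if and only if μ + a minimizes y ↦ P(x + a·𝟙, y); consequently any function F(x) selecting, for each x, the infimum of the minimizers of y ↦ P(x, y) is shift-invariant. -/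
/-- For a shift-invariant `f`, arbitrary `g`, `Q`, and the penalty
`P(x, y) = Q(g(x₁ − f(x))·(x₁ − y)², …, g(xₙ − f(x))·(xₙ − y)²)`, a value `μ` minimizes
`y ↦ P(x, y)` iff `μ + a` minimizes `y ↦ P(x + a·𝟙, y)`; consequently the function selecting
the infimum of the minimizers is shift-invariant. -/
theorem penalty_shift_invariant {n : ℕ} (f : (Fin n → ℝ) → ℝ)
    (hf : ∀ (x : Fin n → ℝ) (a : ℝ), f (fun i => x i + a) = f x + a)
    (g : ℝ → ℝ) (Q : (Fin n → ℝ) → ℝ)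
    (P : (Fin n → ℝ) → ℝ → ℝ)
    (hP : ∀ (x : Fin n → ℝ) (y : ℝ),
      P x y = Q (fun i => g (x i - f x) * (x i - y) ^ 2)) :
    (∀ (a : ℝ) (x : Fin n → ℝ) (μ : ℝ),
      (∀ y, P x μ ≤ P x y) ↔
        (∀ y, P (fun i => x i + a) (μ + a) ≤ P (fun i => x i + a) y)) ∧
    (∀ (a : ℝ) (x : Fin n → ℝ),
      {μ : ℝ | ∀ y, P x μ ≤ P x y}.Nonempty →
      BddBelow {μ : ℝ | ∀ y, P x μ ≤ P x y} →
      sInf {μ : ℝ | ∀ y, P (fun i => x i + a) μ ≤ P (fun i => x i + a) y} =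
        sInf {μ : ℝ | ∀ y, P x μ ≤ P x y} + a) := by
  have key : ∀ (x : Fin n → ℝ) (a y : ℝ),
      P (fun i => x i + a) (y + a) = P x y := by
    intro x a y
    rw [hP, hP, hf]
    congr 1
    funext i
    ring_nf
  have iff_min : ∀ (a : ℝ) (x : Fin n → ℝ) (μ : ℝ),
      (∀ y, P x μ ≤ P x y) ↔
        (∀ y, P (fun i => x i + a) (μ + a) ≤ P (fun i => x i + a) y) := by
    intro a x μ
    constructor
    · intro h y
      have := key x a (y - a)
      rw [sub_add_cancel] at this
      rw [key x a μ, this]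
      exact h _
    · intro h y
      have h1 := h (y + a)
      rw [key x a μ, key x a y] at h1
      exact h1
  refine ⟨iff_min, fun a x hne hbdd => ?_⟩
  have hset : {μ : ℝ | ∀ y, P (fun i => x i + a) μ ≤ P (fun i => x i + a) y}
      = (fun μ => μ + a) '' {μ : ℝ | ∀ y, P x μ ≤ P x y} := by
    ext ν
    simp only [Set.mem_image, Set.mem_setOf_eq]
    constructor
    · intro h
      refine ⟨ν - a, ?_, by ring⟩
      rw [iff_min a x (ν - a)]
      rwa [sub_add_cancel]
    · rintro ⟨μ, hμ, rfl⟩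
      exact (iff_min a x μ).mp hμ
  rw [hset]
  exact ((OrderIso.addRight a).map_csInf' hne hbdd).symm
end

section
/- Let f : ℝⁿ → ℝ be shift-invariant, let g : ℝ → ℝ and D : ℝ → ℝ be arbitrary functions, let w₁, …, wₙ be real weights, and define the penalty P(x, y) = Σ_{i=1}^{n} wᵢ · g(|xᵢ − f(x)|) · D(xᵢ − y). Then for every a ∈ ℝ and every x ∈ ℝⁿ, a real number μ minimizes y ↦ P(x, y) if and only if μ + a minimizes y ↦ P(x + a·𝟙, y). In particular this applies to the generalised spatial-tonal filters obtained with D(t) = t², and any function returning the infimum of the minimizers is shift-invariant. -/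
/-!
Shifting the signal by `a` leaves the tonal residuals `xᵢ - f x` unchanged and turns `xᵢ - y`
into `xᵢ - (y - a)`, so the penalty of the shifted signal is the old penalty translated:
`P(x + a·𝟙, y) = P(x, y - a)`. Minimizers of a translated function are the translated
minimizers, and the infimum commutes with translation.
-/

def minimizers {α β : Type*} [LE β] (F : α → β) : Set α :=
  {μ | ∀ y, F μ ≤ F y}

section Translation

variable {α β : Type*} [AddGroup α] [LE β]

theorem mem_minimizers_comp_sub_iff (F : α → β) (a μ : α) :
    μ ∈ minimizers (fun y => F (y - a)) ↔ μ - a ∈ minimizers F :=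
  (Equiv.subRight a).forall_congr_right (q := fun y => F (μ - a) ≤ F y)

theorem minimizers_comp_sub (F : α → β) (a : α) :
    minimizers (fun y => F (y - a)) = (· + a) '' minimizers F := by
  ext μ
  rw [mem_minimizers_comp_sub_iff, Set.image_add_right, Set.mem_preimage, sub_eq_add_neg]

end Translation

theorem csInf_image_add_const {α : Type*} [ConditionallyCompleteLattice α] [AddGroup α]
    [AddRightMono α] {s : Set α} (hne : s.Nonempty) (hbdd : BddBelow s) (a : α) :
    sInf ((· + a) '' s) = sInf s + a :=
  ((OrderIso.addRight a).map_csInf' hne hbdd).symm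

def spatialTonalPenalty {ι : Type*} [Fintype ι] (f : (ι → ℝ) → ℝ) (g D : ℝ → ℝ)
    (w : ι → ℝ) (x : ι → ℝ) (y : ℝ) : ℝ :=
  ∑ i, w i * g |x i - f x| * D (x i - y)

theorem spatialTonalPenalty_add_const {ι : Type*} [Fintype ι] {f : (ι → ℝ) → ℝ}
    (hf : ∀ (x : ι → ℝ) (a : ℝ), f (fun i => x i + a) = f x + a) (g D : ℝ → ℝ) (w : ι → ℝ)
    (x : ι → ℝ) (a y : ℝ) :
    spatialTonalPenalty f g D w (fun i => x i + a) y = spatialTonalPenalty f g D w x (y - a) := by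
  simp only [spatialTonalPenalty, hf, add_sub_add_right_eq_sub, sub_sub_eq_add_sub]

/-- For a shift-invariant `f`, arbitrary `g`, `D`, weights `w`, and the penalty
`P(x, y) = Σᵢ wᵢ · g(|xᵢ − f(x)|) · D(xᵢ − y)`, a value `μ` minimizes `y ↦ P(x, y)` iff
`μ + a` minimizes `y ↦ P(x + a·𝟙, y)` (this covers the generalised spatial-tonal filters,
obtained with `D(t) = t²`); consequently the function returning the infimum of the
minimizers is shift-invariant. -/
theorem spatial_tonal_penalty_shift_invariant {n : ℕ} (f : (Fin n → ℝ) → ℝ)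
    (hf : ∀ (x : Fin n → ℝ) (a : ℝ), f (fun i => x i + a) = f x + a)
    (g D : ℝ → ℝ) (w : Fin n → ℝ)
    (P : (Fin n → ℝ) → ℝ → ℝ)
    (hP : ∀ (x : Fin n → ℝ) (y : ℝ),
      P x y = ∑ i, w i * g |x i - f x| * D (x i - y)) :
    (∀ (a : ℝ) (x : Fin n → ℝ) (μ : ℝ),
      (∀ y, P x μ ≤ P x y) ↔
        (∀ y, P (fun i => x i + a) (μ + a) ≤ P (fun i => x i + a) y)) ∧
    (∀ (a : ℝ) (x : Fin n → ℝ),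
      {μ : ℝ | ∀ y, P x μ ≤ P x y}.Nonempty →
      BddBelow {μ : ℝ | ∀ y, P x μ ≤ P x y} →
      sInf {μ : ℝ | ∀ y, P (fun i => x i + a) μ ≤ P (fun i => x i + a) y} =
        sInf {μ : ℝ | ∀ y, P x μ ≤ P x y} + a) := by
  obtain rfl : P = spatialTonalPenalty f g D w := funext₂ hP
  have shift (a : ℝ) (x : Fin n → ℝ) : spatialTonalPenalty f g D w (fun i => x i + a) =
      fun y => spatialTonalPenalty f g D w x (y - a) :=
    funext (spatialTonalPenalty_add_const hf g D w x a)
  refine ⟨fun a x μ => ?_, fun a x hne hbdd => ?_⟩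
  · have h := mem_minimizers_comp_sub_iff (spatialTonalPenalty f g D w x) a (μ + a)
    rw [← shift, add_sub_cancel_right] at h
    exact h.symm
  · change sInf (minimizers _) = sInf (minimizers _) + a
    rw [shift, minimizers_comp_sub]
    exact csInf_image_add_const hne hbdd a
end

section
/- Let q > 1 and let n ≥ 1 satisfy n ≤ 1 + ((q+1)/(q−1))^{q−1}. Then the Lehmer mean L_q of n arguments is weakly monotone on (0,∞)ⁿ: for every x ∈ (0,∞)ⁿ and every a > 0, L_q(x + a·𝟙) ≥ L_q(x), where 𝟙 = (1,1,…,1). -/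
/-!
Write `N`, `D`, `S` for the sums of `y i ^ (q + 1)`, `y i ^ q`, `y i ^ (q - 1)` over `y = x + b·𝟙`.
Differentiating in `b`, monotonicity of `L_q(x + b·𝟙) = N / D` amounts to `q N S ≤ (q + 1) D²`.
With `M = max y` one has `N ≤ M D`, and weighted AM–GM gives, for every `i`,
`q M y_i^(q-1) ≤ (q + 1) y_i^q + M^q / K` with `K = ((q + 1) / (q - 1))^(q - 1)`.
Summing over the `n - 1 ≤ K` indices other than the maximal one, and adding the maximal term
`q M^q = (q + 1) M^q - M^q` exactly, yields `q M S ≤ (q + 1) D`.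
-/

open Finset Real

/-- Weighted AM–GM with weights `(q - 1) / q`, `1 / q` on `l y^q` and `l^(1 - q) M^q`,
where `l = (q + 1) / (q - 1)`. -/
theorem mul_mul_rpow_sub_one_le {q : ℝ} (hq : 1 < q) {y M : ℝ} (hy : 0 ≤ y) (hM : 0 ≤ M) :
    q * M * y ^ (q - 1) ≤ (q + 1) * y ^ q + M ^ q / ((q + 1) / (q - 1)) ^ (q - 1) := by
  have hq0 : 0 < q := by linarith
  set l := (q + 1) / (q - 1) with hl
  have hl0 : 0 < l := div_pos (by linarith) (by linarith)
  have hamgm := geom_mean_le_arith_mean2_weighted (w₁ := (q - 1) / q) (w₂ := 1 / q)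
    (p₁ := l * y ^ q) (p₂ := l ^ (1 - q) * M ^ q) (by bound) (by positivity) (by positivity)
    (by positivity) (by field_simp; ring)
  have hgeom : (l * y ^ q) ^ ((q - 1) / q) * (l ^ (1 - q) * M ^ q) ^ (1 / q) = M * y ^ (q - 1) := by
    rw [mul_rpow hl0.le (by positivity), mul_rpow (by positivity) (by positivity),
      ← rpow_mul hy, ← rpow_mul hM, ← rpow_mul hl0.le,
      show (1 - q) * (1 / q) = -((q - 1) / q) by field_simp; ring,
      mul_div_cancel₀ _ hq0.ne', mul_one_div_cancel hq0.ne', rpow_one, rpow_neg hl0.le]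
    field_simp
  have hweights : (q - 1) * l = q + 1 := by rw [hl]; field_simp [show q - 1 ≠ 0 by linarith]
  have hlpow : l ^ (1 - q) = (l ^ (q - 1))⁻¹ := by rw [← rpow_neg hl0.le, neg_sub]
  calc q * M * y ^ (q - 1) = q * (M * y ^ (q - 1)) := mul_assoc _ _ _
    _ ≤ q * ((q - 1) / q * (l * y ^ q) + 1 / q * (l ^ (1 - q) * M ^ q)) := by
        rw [← hgeom]; gcongr
    _ = (q + 1) * y ^ q + M ^ q / l ^ (q - 1) := by
        rw [← hweights, hlpow]; field_simp

variable {ι : Type*} [Fintype ι]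

theorem mul_mul_sum_rpow_sub_one_le {q : ℝ} (hq : 1 < q)
    (hcard : (Fintype.card ι : ℝ) ≤ 1 + ((q + 1) / (q - 1)) ^ (q - 1))
    {y : ι → ℝ} (hy : ∀ i, 0 ≤ y i) (j : ι) :
    q * y j * ∑ i, y i ^ (q - 1) ≤ (q + 1) * ∑ i, y i ^ q := by
  classical
  set K := ((q + 1) / (q - 1)) ^ (q - 1)
  have hK : 0 < K := rpow_pos_of_pos (div_pos (by linarith) (by linarith)) _
  have hj : q * y j * y j ^ (q - 1) = q * y j ^ q := by
    rw [mul_assoc, ← rpow_one_add' (hy j) (by linarith), add_sub_cancel]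
  have hrest : q * y j * ∑ i ∈ univ.erase j, y i ^ (q - 1)
      ≤ (q + 1) * ∑ i ∈ univ.erase j, y i ^ q + y j ^ q := by
    have hcard' : ((univ.erase j).card : ℝ) ≤ K := by
      rw [card_erase_of_mem (mem_univ j), card_univ, Nat.cast_pred (Fintype.card_pos_iff.2 ⟨j⟩)]
      linarith
    calc q * y j * ∑ i ∈ univ.erase j, y i ^ (q - 1)
        = ∑ i ∈ univ.erase j, q * y j * y i ^ (q - 1) := mul_sum _ _ _
      _ ≤ ∑ i ∈ univ.erase j, ((q + 1) * y i ^ q + y j ^ q / K) :=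
          sum_le_sum fun i _ ↦ mul_mul_rpow_sub_one_le hq (hy i) (hy j)
      _ = (q + 1) * ∑ i ∈ univ.erase j, y i ^ q + (univ.erase j).card * (y j ^ q / K) := by
          rw [sum_add_distrib, sum_const, nsmul_eq_mul, mul_sum]
      _ ≤ (q + 1) * ∑ i ∈ univ.erase j, y i ^ q + K * (y j ^ q / K) := by
          gcongr
          exact div_nonneg (rpow_nonneg (hy j) _) hK.le
      _ = (q + 1) * ∑ i ∈ univ.erase j, y i ^ q + y j ^ q := by
          rw [mul_div_cancel₀ _ hK.ne']
  rw [← add_sum_erase _ _ (mem_univ j), ← add_sum_erase _ _ (mem_univ j)]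
  linear_combination hrest + hj

theorem sum_rpow_add_one_le_mul_sum {q M : ℝ} {y : ι → ℝ} (hy : ∀ i, 0 ≤ y i)
    (hM : ∀ i, y i ≤ M) (hq : q + 1 ≠ 0) : ∑ i, y i ^ (q + 1) ≤ M * ∑ i, y i ^ q := by
  rw [mul_sum]
  gcongr with i
  rw [rpow_add_one' (hy i) hq, mul_comm]
  exact mul_le_mul_of_nonneg_right (hM i) (rpow_nonneg (hy i) _)

theorem mul_sum_rpow_add_one_mul_sum_rpow_sub_one_le [Nonempty ι] {q : ℝ} (hq : 1 < q)
    (hcard : (Fintype.card ι : ℝ) ≤ 1 + ((q + 1) / (q - 1)) ^ (q - 1))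
    {y : ι → ℝ} (hy : ∀ i, 0 ≤ y i) :
    q * ((∑ i, y i ^ (q + 1)) * ∑ i, y i ^ (q - 1)) ≤ (q + 1) * (∑ i, y i ^ q) ^ 2 := by
  obtain ⟨j, hj⟩ := Finite.exists_max y
  have hS : 0 ≤ ∑ i, y i ^ (q - 1) := sum_nonneg fun i _ ↦ rpow_nonneg (hy i) _
  have hD : 0 ≤ ∑ i, y i ^ q := sum_nonneg fun i _ ↦ rpow_nonneg (hy i) _
  calc q * ((∑ i, y i ^ (q + 1)) * ∑ i, y i ^ (q - 1))
      ≤ q * ((y j * ∑ i, y i ^ q) * ∑ i, y i ^ (q - 1)) := by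
        gcongr q * (?_ * _)
        exact sum_rpow_add_one_le_mul_sum hy hj (by linarith)
    _ = (∑ i, y i ^ q) * (q * y j * ∑ i, y i ^ (q - 1)) := by ring
    _ ≤ (∑ i, y i ^ q) * ((q + 1) * ∑ i, y i ^ q) := by
        gcongr _ * ?_
        exact mul_mul_sum_rpow_sub_one_le hq hcard hy j
    _ = (q + 1) * (∑ i, y i ^ q) ^ 2 := by ring

theorem hasDerivAt_sum_rpow_add {p b : ℝ} {x : ι → ℝ} (hx : ∀ i, 0 < x i + b) :
    HasDerivAt (fun c ↦ ∑ i, (x i + c) ^ p) (p * ∑ i, (x i + b) ^ (p - 1)) b := by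
  rw [mul_sum]
  exact HasDerivAt.fun_sum fun i _ ↦ by
    simpa using ((hasDerivAt_id b).const_add (x i)).rpow_const (p := p) (Or.inl (hx i).ne')

noncomputable def lehmerMean (q : ℝ) (x : ι → ℝ) : ℝ :=
  (∑ i, x i ^ (q + 1)) / ∑ i, x i ^ q

theorem monotoneOn_lehmerMean_add_const [Nonempty ι] {q : ℝ} (hq : 1 < q)
    (hcard : (Fintype.card ι : ℝ) ≤ 1 + ((q + 1) / (q - 1)) ^ (q - 1))
    {x : ι → ℝ} (hx : ∀ i, 0 < x i) :
    MonotoneOn (fun b ↦ lehmerMean q fun i ↦ x i + b) (Set.Ici 0) := by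
  have hpos {b : ℝ} (hb : 0 ≤ b) (i : ι) : 0 < x i + b := by linarith [hx i]
  have hderiv {b : ℝ} (hb : 0 ≤ b) : HasDerivAt (fun b ↦ lehmerMean q fun i ↦ x i + b)
      (((q + 1) * (∑ i, (x i + b) ^ q) * ∑ i, (x i + b) ^ q
        - (∑ i, (x i + b) ^ (q + 1)) * (q * ∑ i, (x i + b) ^ (q - 1)))
        / (∑ i, (x i + b) ^ q) ^ 2) b := by
    have hD : 0 < ∑ i, (x i + b) ^ q :=
      sum_pos (fun i _ ↦ rpow_pos_of_pos (hpos hb i) q) univ_nonempty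
    have h := (hasDerivAt_sum_rpow_add (p := q + 1) (hpos hb)).div
      (hasDerivAt_sum_rpow_add (hpos hb)) hD.ne'
    rw [add_sub_cancel_right] at h
    exact h
  refine monotoneOn_of_hasDerivWithinAt_nonneg (convex_Ici 0)
    (fun b hb ↦ (hderiv hb).continuousAt.continuousWithinAt)
    (fun b hb ↦ (hderiv (interior_subset hb)).hasDerivWithinAt) fun b hb ↦ ?_
  have key := mul_sum_rpow_add_one_mul_sum_rpow_sub_one_le hq hcard
    fun i ↦ (hpos (interior_subset hb) i).le
  exact div_nonneg (by linear_combination key) (sq_nonneg _)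

theorem lehmerMean_le_lehmerMean_add_const {q : ℝ} (hq : 1 < q)
    (hcard : (Fintype.card ι : ℝ) ≤ 1 + ((q + 1) / (q - 1)) ^ (q - 1))
    {x : ι → ℝ} (hx : ∀ i, 0 < x i) {a : ℝ} (ha : 0 ≤ a) :
    lehmerMean q x ≤ lehmerMean q fun i ↦ x i + a := by
  cases isEmpty_or_nonempty ι
  · simp [lehmerMean]
  · simpa using monotoneOn_lehmerMean_add_const hq hcard hx Set.self_mem_Ici ha ha

theorem lehmer_weakly_monotone_pos_general (q : ℝ) (hq : 1 < q) (n : ℕ)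
    (hnq : (n : ℝ) ≤ 1 + ((q + 1) / (q - 1)) ^ (q - 1)) :
    ∀ (x : Fin n → ℝ) (a : ℝ), (∀ i, 0 < x i) → 0 < a →
      (∑ i, x i ^ (q + 1)) / (∑ i, x i ^ q) ≤
        (∑ i, (x i + a) ^ (q + 1)) / (∑ i, (x i + a) ^ q) :=
  fun _ _ hx ha ↦
    lehmerMean_le_lehmerMean_add_const hq (by rwa [Fintype.card_fin]) hx ha.le

/-- For `q > 1` and `n ≥ 1` with `n ≤ 1 + ((q+1)/(q−1))^(q−1)`, the Lehmer
mean `L_q(x) = (Σᵢ xᵢ^(q+1))/(Σᵢ xᵢ^q)` of `n` arguments is weakly monotone on `(0,∞)ⁿ`: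
`L_q(x + a·𝟙) ≥ L_q(x)` for every `x ∈ (0,∞)ⁿ` and `a > 0`. -/
theorem lehmer_weakly_monotone_pos (q : ℝ) (hq : 1 < q) (n : ℕ) (hn : 1 ≤ n)
    (hnq : (n : ℝ) ≤ 1 + ((q + 1) / (q - 1)) ^ (q - 1)) :
    ∀ (x : Fin n → ℝ) (a : ℝ), (∀ i, 0 < x i) → 0 < a →
      (∑ i, x i ^ (q + 1)) / (∑ i, x i ^ q) ≤
        (∑ i, (x i + a) ^ (q + 1)) / (∑ i, (x i + a) ^ q) :=
  lehmer_weakly_monotone_pos_general q hq n hnq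
end

section
/- The contra-harmonic mean of two arguments, L₁(x₁, x₂) = (x₁² + x₂²)/(x₁ + x₂), is weakly monotone on (0,∞)²: for all x₁, x₂ > 0 and all a > 0, L₁(x₁ + a, x₂ + a) ≥ L₁(x₁, x₂). However, the contra-harmonic mean of three arguments, L₁(x₁, x₂, x₃) = (x₁² + x₂² + x₃²)/(x₁ + x₂ + x₃), is not weakly monotone on (0,∞)³: there exist x ∈ (0,∞)³ and a > 0 such that L₁(x₁ + a, x₂ + a, x₃ + a) < L₁(x₁, x₂, x₃). -/
/-- The contra-harmonic mean (Lehmer mean with `q = 1`) of two arguments is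
weakly monotone on `(0,∞)²`, but the contra-harmonic mean of three arguments is not weakly
monotone on `(0,∞)³`. -/
theorem contraharmonic_weakly_monotone_two_not_three :
    (∀ x₁ x₂ a : ℝ, 0 < x₁ → 0 < x₂ → 0 < a →
      (x₁ ^ 2 + x₂ ^ 2) / (x₁ + x₂) ≤
        ((x₁ + a) ^ 2 + (x₂ + a) ^ 2) / ((x₁ + a) + (x₂ + a))) ∧
    (∃ x₁ x₂ x₃ a : ℝ, 0 < x₁ ∧ 0 < x₂ ∧ 0 < x₃ ∧ 0 < a ∧
      ((x₁ + a) ^ 2 + (x₂ + a) ^ 2 + (x₃ + a) ^ 2) / ((x₁ + a) + (x₂ + a) + (x₃ + a)) <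
        (x₁ ^ 2 + x₂ ^ 2 + x₃ ^ 2) / (x₁ + x₂ + x₃)) := by
  constructor
  · intro x₁ x₂ a h1 h2 ha
    rw [div_le_div_iff₀ (by linarith) (by linarith)]
    nlinarith [mul_pos h1 h2, mul_pos ha ha, mul_pos ha h1, mul_pos ha h2, mul_pos (mul_pos ha ha) h1, mul_pos (mul_pos ha ha) h2, mul_pos ha (mul_pos h1 h2)]
  · exact ⟨1, 1, 10, 1/10, by norm_num, by norm_num, by norm_num, by norm_num, by norm_num⟩
end

section
/- Define F : [0,1]² → [0,1] by F(x₁, x₂) = min(x₁, x₂) if x₁ + x₂ ≥ 1 and F(x₁, x₂) = max(x₁, x₂) otherwise. Then F is internal (its value always coincides with one of its arguments), yet F is not weakly monotone: F(3/4, 0) = 3/4 while F(3/4 + 1/4, 0 + 1/4) = F(1, 1/4) = 1/4 < 3/4. Hence internal means need not be weakly monotone. -/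
/-- The function `F(x₁, x₂) = min(x₁, x₂)` if `x₁ + x₂ ≥ 1`, `max(x₁, x₂)`
otherwise, is internal, yet not weakly monotone on `[0,1]²`: `F(3/4, 0) = 3/4` while
`F(1, 1/4) = 1/4 < 3/4`. Hence internal means need not be weakly monotone. -/
theorem internal_not_weakly_monotone :
    (∀ x₁ x₂ : ℝ,
      (if 1 ≤ x₁ + x₂ then min x₁ x₂ else max x₁ x₂) = x₁ ∨
      (if 1 ≤ x₁ + x₂ then min x₁ x₂ else max x₁ x₂) = x₂) ∧
    (if 1 ≤ (3 / 4 : ℝ) + 0 then min (3 / 4 : ℝ) 0 else max (3 / 4 : ℝ) 0) = 3 / 4 ∧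
    (if 1 ≤ (1 : ℝ) + 1 / 4 then min (1 : ℝ) (1 / 4) else max (1 : ℝ) (1 / 4)) = 1 / 4 ∧
    ¬ (∀ x₁ x₂ a : ℝ, 0 < a →
        x₁ ∈ Set.Icc (0 : ℝ) 1 → x₂ ∈ Set.Icc (0 : ℝ) 1 →
        x₁ + a ∈ Set.Icc (0 : ℝ) 1 → x₂ + a ∈ Set.Icc (0 : ℝ) 1 →
        (if 1 ≤ x₁ + x₂ then min x₁ x₂ else max x₁ x₂) ≤
          (if 1 ≤ (x₁ + a) + (x₂ + a) then min (x₁ + a) (x₂ + a)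
            else max (x₁ + a) (x₂ + a))) := by
  refine ⟨?_, ?_, ?_, ?_⟩
  · intro x₁ x₂
    split
    · rcases min_cases x₁ x₂ with ⟨h, _⟩ | ⟨h, _⟩ <;> simp [h]
    · rcases max_cases x₁ x₂ with ⟨h, _⟩ | ⟨h, _⟩ <;> simp [h]
  · norm_num
  · norm_num
  · intro h
    have := h (3/4) 0 (1/4) (by norm_num) (by norm_num) (by norm_num)
      (by norm_num) (by norm_num)
    norm_num at this
end
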